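/- Let (T,Σ,μ) be a finite measure space, E a Banach space, and suppose f ∈ G¹(μ, E*) is such that the range R_f = {∫_A f dμ : A ∈ Σ} of its indefinite Gelfand integral is convex. Let Γ_f(t) = co̅{0, f(t)} (norm-closed convex hull, equivalently the segment [0, f(t)]). If the bang-bang equality ∫_T Γ_f dμ = ∫_T ex Γ_f dμ holds, then ∫_T Γ_f dμ = R_f. -/
import Mathlib


open MeasureTheory

variable {T : Type*} [MeasurableSpace T] {E : Type*} [NormedAddCommGroup E] [NormedSpace ℝ E]
  [MeasurableSpace (WeakDual ℝ E)]

/-- The Gelfand integral of a multifunction `Γ : T ⇉ E*`: the set of Gelfand integrals of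
all Gelfand integrable (a.e.) selectors of `Γ`. -/
def gelfandIntegralSet (μ : Measure T) (Γ : T → Set (WeakDual ℝ E)) :
    Set (WeakDual ℝ E) :=
  {b | ∃ g : T → WeakDual ℝ E, Measurable g ∧ (∀ y : E, Integrable (fun t => g t y) μ) ∧
    (∀ᵐ t ∂μ, g t ∈ Γ t) ∧ ∀ y : E, b y = ∫ t, g t y ∂μ}

/-- The range `R_f = {∫_A f dμ : A ∈ Σ}` of the indefinite Gelfand integral of `f`. -/
def indefiniteRange (μ : Measure T) (f : T → WeakDual ℝ E) : Set (WeakDual ℝ E) :=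
  {b | ∃ A : Set T, MeasurableSet A ∧ ∀ y : E, b y = ∫ t in A, f t y ∂μ}

/-- Let `f ∈ G¹(μ,E*)` with convex indefinite-integral range `R_f` and
let `Γ_f(t) = co̅{0, f(t)}` be the segment `[0, f(t)]`. If the bang-bang equality
`∫_T Γ_f dμ = ∫_T ex Γ_f dμ` holds, then `∫_T Γ_f dμ = R_f` (and it is convex). -/
theorem stmt14 [BorelSpace (WeakDual ℝ E)] (μ : Measure T) [IsFiniteMeasure μ]
    (f : T → WeakDual ℝ E) (hfmeas : Measurable f)
    (hfint : ∀ y : E, Integrable (fun t => f t y) μ)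
    (hRconv : Convex ℝ (indefiniteRange μ f))
    (hbb : gelfandIntegralSet μ (fun t => segment ℝ 0 (f t)) =
      gelfandIntegralSet μ (fun t => Set.extremePoints ℝ (segment ℝ 0 (f t)))) :
    gelfandIntegralSet μ (fun t => segment ℝ 0 (f t)) = indefiniteRange μ f ∧
      Convex ℝ (gelfandIntegralSet μ (fun t => segment ℝ 0 (f t))) := by
  have key : gelfandIntegralSet μ (fun t => segment ℝ 0 (f t)) = indefiniteRange μ f := by
    apply Set.Subset.antisymm
    · rw [hbb]
      rintro b ⟨g, hgmeas, hgint, hgmem, hgeq⟩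
      have hex : ∀ t, Set.extremePoints ℝ (segment ℝ 0 (f t)) ⊆ {0, f t} := by
        intro t
        rw [← convexHull_pair]
        exact extremePoints_convexHull_subset
      set A : Set T := {t | g t ≠ 0} with hA
      have hAmeas : MeasurableSet A := by
        have : A = g ⁻¹' ({0}ᶜ) := rfl
        rw [this]
        exact hgmeas (isClosed_singleton.measurableSet.compl)
      refine ⟨A, hAmeas, fun y => ?_⟩
      rw [hgeq y, ← integral_add_compl hAmeas (hgint y)]
      have h1 : ∫ t in Aᶜ, g t y ∂μ = 0 := by
        apply setIntegral_eq_zero_of_forall_eq_zero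
        intro t ht
        have : g t = 0 := not_not.mp ht
        rw [this]; rfl
      have h2 : ∫ t in A, g t y ∂μ = ∫ t in A, f t y ∂μ := by
        apply setIntegral_congr_ae hAmeas
        filter_upwards [hgmem] with t hmem ht
        rcases hex t hmem with h | h
        · exact absurd h ht
        · rw [h]
      rw [h1, h2, add_zero]
    · rintro b ⟨A, hAmeas, hb⟩
      refine ⟨A.indicator f, ?_, ?_, ?_, ?_⟩
      · exact hfmeas.indicator hAmeas
      · intro y
        have : (fun t => A.indicator f t y) = A.indicator (fun t => f t y) := by
          ext t; by_cases ht : t ∈ A <;> simp [Set.indicator, ht] <;> rfl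
        rw [this]
        exact (hfint y).indicator hAmeas
      · filter_upwards with t
        by_cases ht : t ∈ A
        · simp only [Set.indicator_of_mem ht]
          exact right_mem_segment ℝ 0 (f t)
        · simp only [Set.indicator_of_notMem ht]
          exact left_mem_segment ℝ 0 (f t)
      · intro y
        rw [hb y]
        have : (fun t => A.indicator f t y) = A.indicator (fun t => f t y) := by
          ext t; by_cases ht : t ∈ A <;> simp [Set.indicator, ht] <;> rfl
        rw [this, integral_indicator hAmeas]
  exact ⟨key, key ▸ hRconv⟩
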